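/- arXiv:2206.08126 — 6 statements merged into one kernel-verified Lean document; each statement's English description precedes it below -/
import Mathlib

section
/- Under the standing setup, the probability that the nearest-centroid rule misclassifies a sample of class 1 satisfies P(‖ω ⊙ (Z̃₁ − μ̃₁)‖₂ > ‖ω ⊙ (Z̃₁ − μ̃₂)‖₂) ≤ 4·(Σ_{l=1}^d ω_l⁴ (μ̃_{1,l} − μ̃_{2,l})² σ̃_{1,l}²) / (Σ_{l=1}^d ω_l² (μ̃_{1,l} − μ̃_{2,l})²)². -/
/-!
Because `μ̃₁ + μ̃₂ = 2`, the difference of the squared weighted distances to the two centroids is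
affine in `Z̃₁`: `‖ω ⊙ (Z̃₁ - μ̃₁)‖² - ‖ω ⊙ (Z̃₁ - μ̃₂)‖² = 2T` with
`T = ∑ ω_l² (μ̃₂ₗ - μ̃₁ₗ) (Z̃₁ₗ - 1)`. So a class-1 sample is misclassified exactly when `T > 0`,
whereas `𝔼 T = -s / 2` with `s = ∑ ω_l² (μ̃₁ₗ - μ̃₂ₗ)²`. Chebyshev's inequality gives
`P(T > 0) ≤ P(|T - 𝔼 T| ≥ s / 2) ≤ 4 Var T / s²`, and since the coordinates are uncorrelated,
`Var T = ∑ ω_l⁴ (μ̃₁ₗ - μ̃₂ₗ)² σ̃₁ₗ²`.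
-/

open MeasureTheory ProbabilityTheory Finset

section Moments

variable {Ω ι : Type*} [MeasurableSpace Ω] {μ : Measure Ω} [Fintype ι]

lemma variance_fun_sum_of_pairwise_covariance_eq_zero [IsFiniteMeasure μ] {X : ι → Ω → ℝ}
    (hX : ∀ i, MemLp (X i) 2 μ) (hcov : Pairwise fun i j ↦ cov[X i, X j; μ] = 0) :
    Var[fun ω ↦ ∑ i, X i ω; μ] = ∑ i, Var[X i; μ] := by
  rw [variance_fun_sum hX]
  refine sum_congr rfl fun i _ ↦ ?_
  rw [sum_eq_single i (fun j _ hji ↦ hcov hji.symm) (by simp),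
    covariance_self (hX i).aemeasurable]

variable [IsProbabilityMeasure μ]

lemma variance_fun_sum_affine_of_uncorrelated {X : ι → Ω → ℝ} (hX : ∀ i, MemLp (X i) 2 μ)
    (hunc : Pairwise fun i j ↦ ∫ ω, X i ω * X j ω ∂μ = (∫ ω, X i ω ∂μ) * ∫ ω, X j ω ∂μ)
    (a b : ι → ℝ) :
    Var[fun ω ↦ ∑ i, (a i * X i ω + b i); μ] = ∑ i, a i ^ 2 * Var[X i; μ] := by
  have hY : ∀ i, MemLp (fun ω ↦ a i * X i ω + b i) 2 μ := fun i ↦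
    ((hX i).const_mul (a i)).add (memLp_const (b i))
  rw [variance_fun_sum_of_pairwise_covariance_eq_zero hY]
  · refine sum_congr rfl fun i _ ↦ ?_
    rw [variance_add_const ((hX i).const_mul (a i)).1, variance_const_mul]
  · intro i j hij
    rw [covariance_add_const_left (((hX i).const_mul _).integrable one_le_two),
      covariance_add_const_right (((hX j).const_mul _).integrable one_le_two),
      covariance_const_mul_left, covariance_const_mul_right, covariance_eq_sub (hX i) (hX j)]
    simp [hunc hij]

lemma integral_fun_sum_affine {X : ι → Ω → ℝ} (hX : ∀ i, Integrable (X i) μ) (a b : ι → ℝ) :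
    ∫ ω, ∑ i, (a i * X i ω + b i) ∂μ = ∑ i, (a i * ∫ ω, X i ω ∂μ + b i) := by
  have hY : ∀ i, Integrable (fun ω ↦ a i * X i ω + b i) μ := fun i ↦
    ((hX i).const_mul (a i)).add (integrable_const (b i))
  rw [integral_finsetSum _ fun i _ ↦ hY i]
  refine sum_congr rfl fun i _ ↦ ?_
  rw [integral_add ((hX i).const_mul (a i)) (integrable_const (b i)), integral_const_mul]
  simp

lemma measureReal_pos_le_variance_div_sq {X : Ω → ℝ} (hX : MemLp X 2 μ) (hmean : μ[X] < 0) :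
    μ.real {ω | 0 < X ω} ≤ Var[X; μ] / μ[X] ^ 2 := by
  have hsub : {ω | 0 < X ω} ⊆ {ω | -μ[X] ≤ |X ω - μ[X]|} := fun ω (hω : 0 < X ω) ↦
    le_abs.2 (Or.inl (show -μ[X] ≤ X ω - μ[X] by linarith))
  calc μ.real {ω | 0 < X ω} ≤ μ.real {ω | -μ[X] ≤ |X ω - μ[X]|} := measureReal_mono hsub
    _ ≤ Var[X; μ] / (-μ[X]) ^ 2 := by
      rw [measureReal_def,
        ← ENNReal.toReal_ofReal (div_nonneg (variance_nonneg X μ) (sq_nonneg (-μ[X])))]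
      exact ENNReal.toReal_mono ENNReal.ofReal_ne_top
        (meas_ge_le_variance_div_sq hX (neg_pos.2 hmean))
    _ = Var[X; μ] / μ[X] ^ 2 := by rw [neg_sq]

lemma measureReal_fun_sum_affine_pos_le {X : ι → Ω → ℝ} (hX : ∀ i, MemLp (X i) 2 μ)
    (hunc : Pairwise fun i j ↦ ∫ ω, X i ω * X j ω ∂μ = (∫ ω, X i ω ∂μ) * ∫ ω, X j ω ∂μ)
    (a b : ι → ℝ) (hmean : ∑ i, (a i * ∫ ω, X i ω ∂μ + b i) < 0) :
    μ.real {ω | 0 < ∑ i, (a i * X i ω + b i)} ≤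
      (∑ i, a i ^ 2 * Var[X i; μ]) / (∑ i, (a i * ∫ ω, X i ω ∂μ + b i)) ^ 2 := by
  have hY : MemLp (fun ω ↦ ∑ i, (a i * X i ω + b i)) 2 μ :=
    memLp_finsetSum (f := fun i ω ↦ a i * X i ω + b i) _ fun i _ ↦
      ((hX i).const_mul (a i)).add (memLp_const (b i))
  have hint := integral_fun_sum_affine (fun i ↦ (hX i).integrable one_le_two) a b
  rw [← variance_fun_sum_affine_of_uncorrelated hX hunc a b, ← hint]
  exact measureReal_pos_le_variance_div_sq hY (hint ▸ hmean)

end Moments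

lemma sqrt_sum_sq_sub_lt_iff {ι : Type*} [Fintype ι] (w x m₁ m₂ : ι → ℝ)
    (hm : ∀ i, m₁ i + m₂ i = 2) :
    √(∑ i, (w i * (x i - m₂ i)) ^ 2) < √(∑ i, (w i * (x i - m₁ i)) ^ 2) ↔
      0 < ∑ i, w i ^ 2 * (m₂ i - m₁ i) * (x i - 1) := by
  have hdiff : ∑ i, (w i * (x i - m₁ i)) ^ 2 - ∑ i, (w i * (x i - m₂ i)) ^ 2 =
      2 * ∑ i, w i ^ 2 * (m₂ i - m₁ i) * (x i - 1) := by
    rw [← sum_sub_distrib, mul_sum]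
    exact sum_congr rfl fun i _ ↦ by linear_combination w i ^ 2 * (m₁ i - m₂ i) * hm i
  rw [Real.sqrt_lt_sqrt_iff (by positivity), ← sub_pos, hdiff]
  exact mul_pos_iff_of_pos_left two_pos

lemma div_midpoint_add_div_midpoint {x y : ℝ} (h : x + y ≠ 0) :
    x / ((x + y) / 2) + y / ((x + y) / 2) = 2 := by
  field_simp

lemma sum_sq_mul_sq_pos {ι : Type*} [Fintype ι] {w v : ι → ℝ} (hw : w ≠ 0) (hv : ∀ i, v i ≠ 0) :
    0 < ∑ i, w i ^ 2 * v i ^ 2 := by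
  obtain ⟨i, hi⟩ := Function.ne_iff.1 hw
  exact sum_pos' (fun i _ ↦ by positivity)
    ⟨i, mem_univ i, mul_pos (sq_pos_of_ne_zero hi) (sq_pos_of_ne_zero (hv i))⟩

theorem stmt3_general {Ω : Type*} [MeasurableSpace Ω] (P : Measure Ω) [IsProbabilityMeasure P]
    (d : ℕ) (Z1 Z2 : Ω → Fin d → ℝ)
    (hZ1nn : ∀ᵐ ω ∂P, ∀ l, 0 ≤ Z1 ω l) (hZ2nn : ∀ᵐ ω ∂P, ∀ l, 0 ≤ Z2 ω l)
    (hZ1L2 : ∀ l, MemLp (fun ω => Z1 ω l) 2 P)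
    (μ1 μ2 σ1 : Fin d → ℝ)
    (hμ1 : ∀ l, μ1 l = ∫ ω, Z1 ω l ∂P) (hμ2 : ∀ l, μ2 l = ∫ ω, Z2 ω l ∂P)
    (hσ1 : ∀ l, σ1 l = Real.sqrt (variance (fun ω => Z1 ω l) P))
    (huncorr1 : ∀ l m, l ≠ m → ∫ ω, Z1 ω l * Z1 ω m ∂P = μ1 l * μ1 m)
    (hμne : ∀ l, μ1 l ≠ μ2 l)
    (ωo : Fin d → ℝ) (hωo : ∀ l, ωo l = (μ1 l + μ2 l) / 2)
    (μt1 μt2 σt1 : Fin d → ℝ)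
    (hμt1 : ∀ l, μt1 l = μ1 l / ωo l) (hμt2 : ∀ l, μt2 l = μ2 l / ωo l)
    (hσt1 : ∀ l, σt1 l = σ1 l / ωo l)
    (w : Fin d → ℝ) (hwne : w ≠ 0) :
    (P {ω | Real.sqrt (∑ l, (w l * (Z1 ω l / ωo l - μt2 l)) ^ 2) <
            Real.sqrt (∑ l, (w l * (Z1 ω l / ωo l - μt1 l)) ^ 2)}).toReal ≤
      4 * (∑ l, (w l) ^ 4 * (μt1 l - μt2 l) ^ 2 * (σt1 l) ^ 2) /
        (∑ l, (w l) ^ 2 * (μt1 l - μt2 l) ^ 2) ^ 2 := by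
  have hmean_nonneg {Z : Ω → Fin d → ℝ} (hZ : ∀ᵐ ω ∂P, ∀ l, 0 ≤ Z ω l) (l : Fin d) :
      0 ≤ ∫ ω, Z ω l ∂P := integral_nonneg_of_ae (hZ.mono fun _ h ↦ h l)
  have hμ_add_ne : ∀ l, μ1 l + μ2 l ≠ 0 := fun l h ↦ hμne l <| by
    linarith [hμ1 l ▸ hmean_nonneg hZ1nn l, hμ2 l ▸ hmean_nonneg hZ2nn l]
  have hωo_ne : ∀ l, ωo l ≠ 0 := fun l ↦ hωo l ▸ div_ne_zero (hμ_add_ne l) two_ne_zero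
  have hsum : ∀ l, μt1 l + μt2 l = 2 := fun l ↦ by
    rw [hμt1, hμt2, hωo]
    exact div_midpoint_add_div_midpoint (hμ_add_ne l)
  have hs_pos : 0 < ∑ l, w l ^ 2 * (μt1 l - μt2 l) ^ 2 := sum_sq_mul_sq_pos hwne fun l ↦ by
    rw [hμt1, hμt2, div_sub_div_same]
    exact div_ne_zero (sub_ne_zero.2 (hμne l)) (hωo_ne l)
  set a : Fin d → ℝ := fun l ↦ w l ^ 2 * (μt2 l - μt1 l) / ωo l
  set b : Fin d → ℝ := fun l ↦ -(w l ^ 2 * (μt2 l - μt1 l))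
  have hevent : {ω | √(∑ l, (w l * (Z1 ω l / ωo l - μt2 l)) ^ 2) <
      √(∑ l, (w l * (Z1 ω l / ωo l - μt1 l)) ^ 2)} = {ω | 0 < ∑ l, (a l * Z1 ω l + b l)} := by
    ext ω
    refine (sqrt_sum_sq_sub_lt_iff w (fun l ↦ Z1 ω l / ωo l) μt1 μt2 hsum).trans ?_
    rw [Set.mem_ofPred_eq]
    exact iff_of_eq (congrArg _ (sum_congr rfl fun l _ ↦ by simp only [a, b]; ring))
  have hmean : ∑ l, (a l * ∫ ω, Z1 ω l ∂P + b l) = -(∑ l, w l ^ 2 * (μt1 l - μt2 l) ^ 2) / 2 := by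
    rw [neg_div, sum_div, ← sum_neg_distrib]
    refine sum_congr rfl fun l _ ↦ ?_
    rw [← hμ1, show a l * μ1 l = w l ^ 2 * (μt2 l - μt1 l) * μt1 l by simp only [a, hμt1]; ring]
    linear_combination w l ^ 2 * (μt2 l - μt1 l) / 2 * hsum l
  have hvar (l : Fin d) :
      a l ^ 2 * Var[fun ω ↦ Z1 ω l; P] = w l ^ 4 * (μt1 l - μt2 l) ^ 2 * σt1 l ^ 2 := by
    rw [hσt1, div_pow (σ1 l), hσ1, Real.sq_sqrt (variance_nonneg _ _)]
    ring
  have hunc : Pairwise fun l m ↦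
      ∫ ω, Z1 ω l * Z1 ω m ∂P = (∫ ω, Z1 ω l ∂P) * ∫ ω, Z1 ω m ∂P := fun l m hlm ↦
    (huncorr1 l m hlm).trans (by rw [hμ1, hμ1])
  rw [hevent, ← measureReal_def]
  refine (measureReal_fun_sum_affine_pos_le hZ1L2 hunc a b (by linarith)).trans_eq ?_
  rw [hmean, sum_congr rfl fun l _ ↦ hvar l]
  field_simp
  norm_num

/-- First Cantelli step in the proof of Proposition 3.1: the probability that the weighted
nearest-centroid rule misclassifies a sample of class 1 is bounded by
`4 ∑ ω⁴ (μ̃₁-μ̃₂)² σ̃₁² / (∑ ω² (μ̃₁-μ̃₂)²)²`. -/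
theorem stmt3 {Ω : Type*} [MeasurableSpace Ω] (P : Measure Ω) [IsProbabilityMeasure P]
    (d : ℕ) (hd : 1 ≤ d) (Z1 Z2 : Ω → Fin d → ℝ)
    (hZ1nn : ∀ᵐ ω ∂P, ∀ l, 0 ≤ Z1 ω l) (hZ2nn : ∀ᵐ ω ∂P, ∀ l, 0 ≤ Z2 ω l)
    (hZ1L2 : ∀ l, MemLp (fun ω => Z1 ω l) 2 P)
    (hZ2L2 : ∀ l, MemLp (fun ω => Z2 ω l) 2 P)
    (μ1 μ2 σ1 σ2 : Fin d → ℝ)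
    (hμ1 : ∀ l, μ1 l = ∫ ω, Z1 ω l ∂P) (hμ2 : ∀ l, μ2 l = ∫ ω, Z2 ω l ∂P)
    (hσ1 : ∀ l, σ1 l = Real.sqrt (variance (fun ω => Z1 ω l) P))
    (hσ2 : ∀ l, σ2 l = Real.sqrt (variance (fun ω => Z2 ω l) P))
    (huncorr1 : ∀ l m, l ≠ m → ∫ ω, Z1 ω l * Z1 ω m ∂P = μ1 l * μ1 m)
    (huncorr2 : ∀ l m, l ≠ m → ∫ ω, Z2 ω l * Z2 ω m ∂P = μ2 l * μ2 m)
    (hμne : ∀ l, μ1 l ≠ μ2 l)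
    (ωo : Fin d → ℝ) (hωo : ∀ l, ωo l = (μ1 l + μ2 l) / 2)
    (μt1 μt2 σt1 σt2 : Fin d → ℝ)
    (hμt1 : ∀ l, μt1 l = μ1 l / ωo l) (hμt2 : ∀ l, μt2 l = μ2 l / ωo l)
    (hσt1 : ∀ l, σt1 l = σ1 l / ωo l) (hσt2 : ∀ l, σt2 l = σ2 l / ωo l)
    (w : Fin d → ℝ) (hw : ∀ l, 0 ≤ w l) (hwne : w ≠ 0) :
    (P {ω | Real.sqrt (∑ l, (w l * (Z1 ω l / ωo l - μt2 l)) ^ 2) <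
            Real.sqrt (∑ l, (w l * (Z1 ω l / ωo l - μt1 l)) ^ 2)}).toReal ≤
      4 * (∑ l, (w l) ^ 4 * (μt1 l - μt2 l) ^ 2 * (σt1 l) ^ 2) /
        (∑ l, (w l) ^ 2 * (μt1 l - μt2 l) ^ 2) ^ 2 :=
  stmt3_general P d Z1 Z2 hZ1nn hZ2nn hZ1L2 μ1 μ2 σ1 hμ1 hμ2 hσ1 huncorr1 hμne ωo hωo μt1 μt2 σt1
    hμt1 hμt2 hσt1 w hwne
end

section
/- Under the standing setup, define the expected misclassification rate of the weighted nearest-centroid classifier as R = (1/2)·[ P(‖ω ⊙ (Z̃₁ − μ̃₁)‖₂ > ‖ω ⊙ (Z̃₁ − μ̃₂)‖₂) + P(‖ω ⊙ (Z̃₂ − μ̃₂)‖₂ > ‖ω ⊙ (Z̃₂ − μ̃₁)‖₂) ]. Then R ≤ 2·(Σ_{l=1}^d ω_l⁴ (μ̃_{1,l} − μ̃_{2,l})² (σ̃_{1,l}² + σ̃_{2,l}²)) / (Σ_{l=1}^d ω_l² (μ̃_{1,l} − μ̃_{2,l})²)². -/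
open MeasureTheory ProbabilityTheory Finset

/-! Misclassifying a point `X` of the class with centroid `a` as `b` means that the linear
statistic `S = ∑ wᵢ² (aᵢ - bᵢ) Xᵢ` falls more than `D / 2` below its mean, where
`D = ∑ wᵢ² (aᵢ - bᵢ)²`, because `‖w ⊙ (X - b)‖² - ‖w ⊙ (X - a)‖² = 2 (S - 𝔼 S) + D`.
For uncorrelated coordinates `Var S = ∑ wᵢ⁴ (aᵢ - bᵢ)² Var Xᵢ`, so Chebyshev's inequality bounds
each error probability by `4 Var S / D²`; averaging over the two classes gives the bound. -/

section

variable {Ω ι : Type*} [MeasurableSpace Ω] {P : Measure Ω} [Fintype ι]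

lemma variance_fun_sum_const_mul_of_pairwise_covariance_eq_zero [IsFiniteMeasure P]
    {X : ι → Ω → ℝ} (hX : ∀ i, MemLp (X i) 2 P)
    (hcov : Pairwise fun i j => cov[X i, X j; P] = 0) (c : ι → ℝ) :
    Var[fun ω => ∑ i, c i * X i ω; P] = ∑ i, c i ^ 2 * Var[X i; P] := by
  rw [variance_fun_sum' (X := fun i ω => c i * X i ω) fun i _ => (hX i).const_mul _]
  refine sum_congr rfl fun i _ => ?_
  simp only [covariance_const_mul_left, covariance_const_mul_right]
  rw [sum_eq_single i (fun j _ hji => by rw [hcov hji.symm]; ring) (by simp),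
    covariance_self (hX i).aemeasurable]
  ring

lemma sum_sq_mul_sub_sub_sum_sq_mul_sub (w x a b : ι → ℝ) :
    ∑ i, (w i * (x i - b i)) ^ 2 - ∑ i, (w i * (x i - a i)) ^ 2 =
      2 * ∑ i, w i ^ 2 * (a i - b i) * (x i - a i) + ∑ i, w i ^ 2 * (a i - b i) ^ 2 := by
  rw [mul_sum, ← sum_sub_distrib, ← sum_add_distrib]
  exact sum_congr rfl fun i _ => by ring

lemma measureReal_weighted_dist_lt_le [IsFiniteMeasure P] {X : ι → Ω → ℝ}
    (hX : ∀ i, MemLp (X i) 2 P) (hcov : Pairwise fun i j => cov[X i, X j; P] = 0)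
    (w b : ι → ℝ) :
    P.real {ω | √(∑ i, (w i * (X i ω - b i)) ^ 2) < √(∑ i, (w i * (X i ω - P[X i])) ^ 2)} ≤
      4 * (∑ i, w i ^ 4 * (P[X i] - b i) ^ 2 * Var[X i; P]) /
        (∑ i, w i ^ 2 * (P[X i] - b i) ^ 2) ^ 2 := by
  set D := ∑ i, w i ^ 2 * (P[X i] - b i) ^ 2
  set c : ι → ℝ := fun i => w i ^ 2 * (P[X i] - b i)
  set S : Ω → ℝ := fun ω => ∑ i, c i * X i ω
  have hS : MemLp S 2 P := memLp_finsetSum _ fun i _ => (hX i).const_mul (c i)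
  have hES : P[S] = ∑ i, c i * P[X i] := by
    rw [integral_finsetSum _ fun i _ => ((hX i).integrable one_le_two).const_mul _]
    simp only [integral_const_mul]
  have hsub : {ω | √(∑ i, (w i * (X i ω - b i)) ^ 2) < √(∑ i, (w i * (X i ω - P[X i])) ^ 2)}
      ⊆ {ω | S ω - P[S] < -(D / 2)} := by
    intro ω hω
    rw [Set.mem_ofPred_eq, Real.sqrt_lt_sqrt_iff (by positivity), ← sub_neg,
      sum_sq_mul_sub_sub_sum_sq_mul_sub] at hω
    simp only [Set.mem_ofPred_eq, hES, S, ← sum_sub_distrib, ← mul_sub]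
    linarith
  have hvar : Var[S; P] = ∑ i, w i ^ 4 * (P[X i] - b i) ^ 2 * Var[X i; P] := by
    rw [variance_fun_sum_const_mul_of_pairwise_covariance_eq_zero hX hcov c]
    exact sum_congr rfl fun i _ => by ring
  rcases (show 0 ≤ D by positivity).eq_or_lt with hD | hD
  · -- `D = 0` forces `c = 0`, so the event is empty and the bound reads `0 ≤ x / 0 = 0`.
    have hc : ∀ i, c i = 0 := fun i => by
      have hi := (sum_eq_zero_iff_of_nonneg fun i _ => by positivity).1 hD.symm i (mem_univ i)
      rw [← sq_eq_zero_iff, show c i ^ 2 = w i ^ 2 * (w i ^ 2 * (P[X i] - b i) ^ 2) by ring, hi,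
        mul_zero]
    have hempty : {ω | S ω - P[S] < -(D / 2)} = ∅ := by simp [S, hc, ← hD]
    rw [Set.subset_empty_iff.1 (hsub.trans hempty.subset), measureReal_empty, ← hD]
    simp
  · have hdev : {ω | S ω - P[S] < -(D / 2)} ⊆ {ω | D / 2 ≤ |S ω - P[S]|} := fun ω hω => by
      rw [Set.mem_ofPred_eq, le_abs]; right; linarith [Set.mem_ofPred_eq ▸ hω]
    calc P.real _ ≤ P.real {ω | D / 2 ≤ |S ω - P[S]|} := measureReal_mono (hsub.trans hdev)
      _ ≤ Var[S; P] / (D / 2) ^ 2 :=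
        ENNReal.toReal_le_of_le_ofReal (div_nonneg (variance_nonneg _ _) (by positivity))
          (meas_ge_le_variance_div_sq hS (by positivity))
      _ = _ := by rw [hvar]; field_simp; ring

lemma measureReal_rescaled_dist_lt_le [IsProbabilityMeasure P] {Z : Ω → ι → ℝ}
    (hZ : ∀ i, MemLp (fun ω => Z ω i) 2 P) {μ σ s μt σt : ι → ℝ}
    (hμ : ∀ i, μ i = ∫ ω, Z ω i ∂P) (hσ : ∀ i, σ i = √Var[fun ω => Z ω i; P])
    (hunc : ∀ i j, i ≠ j → ∫ ω, Z ω i * Z ω j ∂P = μ i * μ j)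
    (hμt : ∀ i, μt i = μ i / s i) (hσt : ∀ i, σt i = σ i / s i) (w b : ι → ℝ) :
    P.real {ω | √(∑ i, (w i * (Z ω i / s i - b i)) ^ 2) <
        √(∑ i, (w i * (Z ω i / s i - μt i)) ^ 2)} ≤
      4 * (∑ i, w i ^ 4 * (μt i - b i) ^ 2 * σt i ^ 2) /
        (∑ i, w i ^ 2 * (μt i - b i) ^ 2) ^ 2 := by
  set X : ι → Ω → ℝ := fun i ω => Z ω i / s i
  have hX : ∀ i, MemLp (X i) 2 P := fun i => by
    simpa only [X, div_eq_mul_inv] using (hZ i).mul_const (s i)⁻¹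
  have hmean : ∀ i, P[X i] = μt i := fun i => by rw [integral_div, hμt, hμ]
  have hvar : ∀ i, Var[X i; P] = σt i ^ 2 := fun i => by
    simp only [X, div_eq_mul_inv, variance_mul_const, hσt, hσ, mul_pow,
      Real.sq_sqrt (variance_nonneg _ _), inv_pow]
  have hcov : Pairwise fun i j => cov[X i, X j; P] = 0 := fun i j hij => by
    simp only [X, div_eq_mul_inv, covariance_mul_const_left, covariance_mul_const_right]
    rw [covariance_eq_sub (hZ i) (hZ j)]
    simp [hunc i j hij, hμ]
  have h := measureReal_weighted_dist_lt_le hX hcov w b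
  simp only [hmean, hvar] at h
  exact h

end

theorem stmt4_general {Ω : Type*} [MeasurableSpace Ω] (P : Measure Ω) [IsProbabilityMeasure P]
    (d : ℕ) (Z1 Z2 : Ω → Fin d → ℝ)
    (hZ1L2 : ∀ l, MemLp (fun ω => Z1 ω l) 2 P)
    (hZ2L2 : ∀ l, MemLp (fun ω => Z2 ω l) 2 P)
    (μ1 μ2 σ1 σ2 : Fin d → ℝ)
    (hμ1 : ∀ l, μ1 l = ∫ ω, Z1 ω l ∂P) (hμ2 : ∀ l, μ2 l = ∫ ω, Z2 ω l ∂P)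
    (hσ1 : ∀ l, σ1 l = Real.sqrt (variance (fun ω => Z1 ω l) P))
    (hσ2 : ∀ l, σ2 l = Real.sqrt (variance (fun ω => Z2 ω l) P))
    (huncorr1 : ∀ l m, l ≠ m → ∫ ω, Z1 ω l * Z1 ω m ∂P = μ1 l * μ1 m)
    (huncorr2 : ∀ l m, l ≠ m → ∫ ω, Z2 ω l * Z2 ω m ∂P = μ2 l * μ2 m)
    (ωo : Fin d → ℝ)
    (μt1 μt2 σt1 σt2 : Fin d → ℝ)
    (hμt1 : ∀ l, μt1 l = μ1 l / ωo l) (hμt2 : ∀ l, μt2 l = μ2 l / ωo l)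
    (hσt1 : ∀ l, σt1 l = σ1 l / ωo l) (hσt2 : ∀ l, σt2 l = σ2 l / ωo l)
    (w : Fin d → ℝ)
    (R : ℝ)
    (hR : R = (1 / 2) *
      ((P {ω | Real.sqrt (∑ l, (w l * (Z1 ω l / ωo l - μt2 l)) ^ 2) <
               Real.sqrt (∑ l, (w l * (Z1 ω l / ωo l - μt1 l)) ^ 2)}).toReal +
       (P {ω | Real.sqrt (∑ l, (w l * (Z2 ω l / ωo l - μt1 l)) ^ 2) <
               Real.sqrt (∑ l, (w l * (Z2 ω l / ωo l - μt2 l)) ^ 2)}).toReal)) :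
    R ≤ 2 * (∑ l, (w l) ^ 4 * (μt1 l - μt2 l) ^ 2 * ((σt1 l) ^ 2 + (σt2 l) ^ 2)) /
        (∑ l, (w l) ^ 2 * (μt1 l - μt2 l) ^ 2) ^ 2 := by
  have h1 := measureReal_rescaled_dist_lt_le hZ1L2 hμ1 hσ1 huncorr1 hμt1 hσt1 w μt2
  have h2 := measureReal_rescaled_dist_lt_le hZ2L2 hμ2 hσ2 huncorr2 hμt2 hσt2 w μt1
  simp only [sub_sq_comm (μt2 _)] at h2
  have hsplit : ∑ l, w l ^ 4 * (μt1 l - μt2 l) ^ 2 * (σt1 l ^ 2 + σt2 l ^ 2) =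
      ∑ l, w l ^ 4 * (μt1 l - μt2 l) ^ 2 * σt1 l ^ 2 +
        ∑ l, w l ^ 4 * (μt1 l - μt2 l) ^ 2 * σt2 l ^ 2 := by
    simp only [mul_add, sum_add_distrib]
  rw [hR, hsplit]
  exact (mul_le_mul_of_nonneg_left (add_le_add h1 h2) (by norm_num)).trans_eq (by ring)

/-- The first (sharper) inequality in the proof chain of Proposition 3.1: the expected
misclassification rate `R` of the weighted nearest-centroid classifier satisfies
`R ≤ 2 ∑ ω⁴ (μ̃₁-μ̃₂)² (σ̃₁²+σ̃₂²) / (∑ ω² (μ̃₁-μ̃₂)²)²`. -/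
theorem stmt4 {Ω : Type*} [MeasurableSpace Ω] (P : Measure Ω) [IsProbabilityMeasure P]
    (d : ℕ) (hd : 1 ≤ d) (Z1 Z2 : Ω → Fin d → ℝ)
    (hZ1nn : ∀ᵐ ω ∂P, ∀ l, 0 ≤ Z1 ω l) (hZ2nn : ∀ᵐ ω ∂P, ∀ l, 0 ≤ Z2 ω l)
    (hZ1L2 : ∀ l, MemLp (fun ω => Z1 ω l) 2 P)
    (hZ2L2 : ∀ l, MemLp (fun ω => Z2 ω l) 2 P)
    (μ1 μ2 σ1 σ2 : Fin d → ℝ)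
    (hμ1 : ∀ l, μ1 l = ∫ ω, Z1 ω l ∂P) (hμ2 : ∀ l, μ2 l = ∫ ω, Z2 ω l ∂P)
    (hσ1 : ∀ l, σ1 l = Real.sqrt (variance (fun ω => Z1 ω l) P))
    (hσ2 : ∀ l, σ2 l = Real.sqrt (variance (fun ω => Z2 ω l) P))
    (huncorr1 : ∀ l m, l ≠ m → ∫ ω, Z1 ω l * Z1 ω m ∂P = μ1 l * μ1 m)
    (huncorr2 : ∀ l m, l ≠ m → ∫ ω, Z2 ω l * Z2 ω m ∂P = μ2 l * μ2 m)
    (hμne : ∀ l, μ1 l ≠ μ2 l)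
    (ωo : Fin d → ℝ) (hωo : ∀ l, ωo l = (μ1 l + μ2 l) / 2)
    (μt1 μt2 σt1 σt2 : Fin d → ℝ)
    (hμt1 : ∀ l, μt1 l = μ1 l / ωo l) (hμt2 : ∀ l, μt2 l = μ2 l / ωo l)
    (hσt1 : ∀ l, σt1 l = σ1 l / ωo l) (hσt2 : ∀ l, σt2 l = σ2 l / ωo l)
    (w : Fin d → ℝ) (hw : ∀ l, 0 ≤ w l) (hwne : w ≠ 0)
    (R : ℝ)
    (hR : R = (1 / 2) *
      ((P {ω | Real.sqrt (∑ l, (w l * (Z1 ω l / ωo l - μt2 l)) ^ 2) <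
               Real.sqrt (∑ l, (w l * (Z1 ω l / ωo l - μt1 l)) ^ 2)}).toReal +
       (P {ω | Real.sqrt (∑ l, (w l * (Z2 ω l / ωo l - μt1 l)) ^ 2) <
               Real.sqrt (∑ l, (w l * (Z2 ω l / ωo l - μt2 l)) ^ 2)}).toReal)) :
    R ≤ 2 * (∑ l, (w l) ^ 4 * (μt1 l - μt2 l) ^ 2 * ((σt1 l) ^ 2 + (σt2 l) ^ 2)) /
        (∑ l, (w l) ^ 2 * (μt1 l - μt2 l) ^ 2) ^ 2 :=
  stmt4_general P d Z1 Z2 hZ1L2 hZ2L2 μ1 μ2 σ1 σ2 hμ1 hμ2 hσ1 hσ2 huncorr1 huncorr2 ωo μt1 μt2 σt1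
    σt2 hμt1 hμt2 hσt1 hσt2 w R hR
end

section
/- Under the standing setup, and assuming additionally that σ_{1,l} + σ_{2,l} > 0 for every l, the expected misclassification rate R = (1/2)·[ P(‖ω ⊙ (Z̃₁ − μ̃₁)‖₂ > ‖ω ⊙ (Z̃₁ − μ̃₂)‖₂) + P(‖ω ⊙ (Z̃₂ − μ̃₂)‖₂ > ‖ω ⊙ (Z̃₂ − μ̃₁)‖₂) ] satisfies R ≤ 8·(Σ_{l=1}^d ω_l⁴ (σ̃_{1,l} + σ̃_{2,l})²) / (Σ_{l=1}^d ω_l² (μ̃_{1,l} − μ̃_{2,l})²)². -/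
open MeasureTheory ProbabilityTheory Finset

/-!
Being nearer, in the `w`-weighted Euclidean distance, to the wrong centroid `b` than to the true
mean `m` is a deviation event for a linear statistic: expanding the squares, it forces
`∑ 2 w² (b - m) (X - m) > ∑ w² (b - m)²`. The coordinates being uncorrelated, that statistic has
variance `∑ 4 w⁴ (b - m)² Var X`, and Chebyshev's inequality bounds the probability. After
normalising by the midpoints of the means, nonnegativity gives `|b - m| ≤ 2`, and
`σ̃₁² + σ̃₂² ≤ (σ̃₁ + σ̃₂)²` combines the two classes.
-/

section

variable {ι : Type*} [Fintype ι]

lemma sum_sq_sub_lt_sum_mul_sub_of_sqrt_lt {x m b w : ι → ℝ}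
    (h : √(∑ l, (w l * (x l - b l)) ^ 2) < √(∑ l, (w l * (x l - m l)) ^ 2)) :
    ∑ l, w l ^ 2 * (b l - m l) ^ 2 < ∑ l, 2 * w l ^ 2 * (b l - m l) * (x l - m l) := by
  rw [Real.sqrt_lt_sqrt_iff (sum_nonneg fun l _ => sq_nonneg _)] at h
  have expand : ∑ l, (w l * (x l - b l)) ^ 2 = ∑ l, (w l * (x l - m l)) ^ 2
      - ∑ l, 2 * w l ^ 2 * (b l - m l) * (x l - m l) + ∑ l, w l ^ 2 * (b l - m l) ^ 2 := by
    rw [← sum_sub_distrib, ← sum_add_distrib]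
    exact sum_congr rfl fun l _ => by ring
  linarith

variable {Ω : Type*} [MeasurableSpace Ω] {P : Measure Ω} [IsProbabilityMeasure P]

lemma variance_fun_sum_const_mul_of_uncorrelated {X : ι → Ω → ℝ} (hX : ∀ l, MemLp (X l) 2 P)
    (hunc : Pairwise fun l k => cov[X l, X k; P] = 0) (c : ι → ℝ) :
    Var[fun ω => ∑ l, c l * X l ω; P] = ∑ l, c l ^ 2 * Var[X l; P] := by
  rw [variance_fun_sum fun l => (hX l).const_mul (c l)]
  refine sum_congr rfl fun l _ => ?_
  rw [sum_eq_single l fun k _ hkl => by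
    rw [covariance_const_mul_left, covariance_const_mul_right, hunc hkl.symm, mul_zero, mul_zero]]
  · rw [covariance_const_mul_left, covariance_const_mul_right,
      covariance_self (hX l).aemeasurable]
    ring
  · simp

theorem measure_sqrt_sum_sq_lt_toReal_le {X : ι → Ω → ℝ} (hX : ∀ l, MemLp (X l) 2 P)
    (hunc : Pairwise fun l k => cov[X l, X k; P] = 0) {m : ι → ℝ} (hm : ∀ l, m l = P[X l])
    {b w : ι → ℝ} (hΔ : 0 < ∑ l, w l ^ 2 * (b l - m l) ^ 2) :
    (P {ω | √(∑ l, (w l * (X l ω - b l)) ^ 2) < √(∑ l, (w l * (X l ω - m l)) ^ 2)}).toReal ≤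
      (∑ l, 4 * w l ^ 4 * (b l - m l) ^ 2 * Var[X l; P]) /
        (∑ l, w l ^ 2 * (b l - m l) ^ 2) ^ 2 := by
  set Δ := ∑ l, w l ^ 2 * (b l - m l) ^ 2
  set c : ι → ℝ := fun l => 2 * w l ^ 2 * (b l - m l)
  set Y : Ω → ℝ := fun ω => ∑ l, c l * X l ω
  have hY : MemLp Y 2 P := memLp_finsetSum _ fun l _ => (hX l).const_mul (c l)
  have hY_centered : ∀ ω, Y ω - P[Y] = ∑ l, c l * (X l ω - m l) := fun ω => by
    rw [integral_finsetSum _ fun l _ => ((hX l).integrable one_le_two).const_mul (c l)]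
    simp only [Y, integral_const_mul, ← hm, ← sum_sub_distrib, mul_sub]
  have hsub : {ω | √(∑ l, (w l * (X l ω - b l)) ^ 2) < √(∑ l, (w l * (X l ω - m l)) ^ 2)} ⊆
      {ω | Δ ≤ |Y ω - P[Y]|} := fun ω hω => by
    rw [Set.mem_ofPred_eq, hY_centered]
    exact (sum_sq_sub_lt_sum_mul_sub_of_sqrt_lt hω).le.trans (le_abs_self _)
  have hVar : Var[Y; P] = ∑ l, 4 * w l ^ 4 * (b l - m l) ^ 2 * Var[X l; P] := by
    rw [variance_fun_sum_const_mul_of_uncorrelated hX hunc c]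
    exact sum_congr rfl fun l _ => by ring
  rw [← hVar]
  exact ENNReal.toReal_le_of_le_ofReal (div_nonneg (variance_nonneg _ _) (sq_nonneg _))
    ((measure_mono hsub).trans (meas_ge_le_variance_div_sq hY hΔ))

theorem measure_misclassified_toReal_le {Z : Ω → ι → ℝ}
    (hL2 : ∀ l, MemLp (fun ω => Z ω l) 2 P) {μ : ι → ℝ} (hμ : ∀ l, μ l = ∫ ω, Z ω l ∂P)
    (hunc : ∀ l k, l ≠ k → ∫ ω, Z ω l * Z ω k ∂P = μ l * μ k)
    {s μt μt' σt : ι → ℝ} (hμt : ∀ l, μt l = μ l / s l)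
    (hσt : ∀ l, σt l = √Var[fun ω => Z ω l; P] / s l)
    (hgap : ∀ l, (μt' l - μt l) ^ 2 ≤ 4) {w : ι → ℝ}
    (hΔ : 0 < ∑ l, w l ^ 2 * (μt' l - μt l) ^ 2) :
    (P {ω | √(∑ l, (w l * (Z ω l / s l - μt' l)) ^ 2) <
        √(∑ l, (w l * (Z ω l / s l - μt l)) ^ 2)}).toReal ≤
      16 * (∑ l, w l ^ 4 * σt l ^ 2) / (∑ l, w l ^ 2 * (μt' l - μt l) ^ 2) ^ 2 := by
  have hX : ∀ l, MemLp (fun ω => Z ω l / s l) 2 P := fun l => by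
    simpa only [div_eq_mul_inv] using (hL2 l).mul_const (s l)⁻¹
  have hcov : Pairwise fun l k => cov[fun ω => Z ω l / s l, fun ω => Z ω k / s k; P] = 0 :=
    fun l k hlk => by
      dsimp only
      rw [covariance_fun_div_left, covariance_fun_div_right, covariance_eq_sub (hL2 l) (hL2 k)]
      simp only [Pi.mul_apply, hunc l k hlk, ← hμ, sub_self, zero_div]
  have hm : ∀ l, μt l = P[fun ω => Z ω l / s l] := fun l => by rw [hμt, hμ, integral_div]
  have hVar : ∀ l, Var[fun ω => Z ω l / s l; P] = σt l ^ 2 := fun l => by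
    simp_rw [hσt, div_pow, Real.sq_sqrt (variance_nonneg _ _), div_eq_mul_inv, variance_mul_const,
      inv_pow]
  refine (measure_sqrt_sum_sq_lt_toReal_le hX hcov hm hΔ).trans
    (div_le_div_of_nonneg_right ?_ (sq_nonneg _))
  rw [mul_sum]
  refine sum_le_sum fun l _ => ?_
  rw [hVar]
  have : 0 ≤ w l ^ 4 * σt l ^ 2 := by positivity
  nlinarith [hgap l]

end

lemma half_add_pos_of_ne {x y : ℝ} (hx : 0 ≤ x) (hy : 0 ≤ y) (hne : x ≠ y) : 0 < (x + y) / 2 := by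
  by_contra! h
  exact hne (by linarith)

lemma sq_div_sub_div_le_four {x y o : ℝ} (hx : 0 ≤ x) (hy : 0 ≤ y) (ho : o = (x + y) / 2) :
    (x / o - y / o) ^ 2 ≤ 4 := by
  rcases (show 0 ≤ o by rw [ho]; positivity).eq_or_lt with h0 | hpos
  · simp [← h0]
  · rw [div_sub_div_same, div_pow, div_le_iff₀ (by positivity), ho]
    nlinarith

theorem stmt5_general {Ω : Type*} [MeasurableSpace Ω] (P : Measure Ω) [IsProbabilityMeasure P]
    (d : ℕ) (Z1 Z2 : Ω → Fin d → ℝ)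
    (hZ1nn : ∀ᵐ ω ∂P, ∀ l, 0 ≤ Z1 ω l) (hZ2nn : ∀ᵐ ω ∂P, ∀ l, 0 ≤ Z2 ω l)
    (hZ1L2 : ∀ l, MemLp (fun ω => Z1 ω l) 2 P)
    (hZ2L2 : ∀ l, MemLp (fun ω => Z2 ω l) 2 P)
    (μ1 μ2 σ1 σ2 : Fin d → ℝ)
    (hμ1 : ∀ l, μ1 l = ∫ ω, Z1 ω l ∂P) (hμ2 : ∀ l, μ2 l = ∫ ω, Z2 ω l ∂P)
    (hσ1 : ∀ l, σ1 l = Real.sqrt (variance (fun ω => Z1 ω l) P))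
    (hσ2 : ∀ l, σ2 l = Real.sqrt (variance (fun ω => Z2 ω l) P))
    (huncorr1 : ∀ l m, l ≠ m → ∫ ω, Z1 ω l * Z1 ω m ∂P = μ1 l * μ1 m)
    (huncorr2 : ∀ l m, l ≠ m → ∫ ω, Z2 ω l * Z2 ω m ∂P = μ2 l * μ2 m)
    (hμne : ∀ l, μ1 l ≠ μ2 l)
    (ωo : Fin d → ℝ) (hωo : ∀ l, ωo l = (μ1 l + μ2 l) / 2)
    (μt1 μt2 σt1 σt2 : Fin d → ℝ)
    (hμt1 : ∀ l, μt1 l = μ1 l / ωo l) (hμt2 : ∀ l, μt2 l = μ2 l / ωo l)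
    (hσt1 : ∀ l, σt1 l = σ1 l / ωo l) (hσt2 : ∀ l, σt2 l = σ2 l / ωo l)
    (w : Fin d → ℝ) (hwne : w ≠ 0)
    (R : ℝ)
    (hR : R = (1 / 2) *
      ((P {ω | Real.sqrt (∑ l, (w l * (Z1 ω l / ωo l - μt2 l)) ^ 2) <
               Real.sqrt (∑ l, (w l * (Z1 ω l / ωo l - μt1 l)) ^ 2)}).toReal +
       (P {ω | Real.sqrt (∑ l, (w l * (Z2 ω l / ωo l - μt1 l)) ^ 2) <
               Real.sqrt (∑ l, (w l * (Z2 ω l / ωo l - μt2 l)) ^ 2)}).toReal)) :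
    R ≤ 8 * (∑ l, (w l) ^ 4 * (σt1 l + σt2 l) ^ 2) /
        (∑ l, (w l) ^ 2 * (μt1 l - μt2 l) ^ 2) ^ 2 := by
  have hμ1nn : ∀ l, 0 ≤ μ1 l := fun l => hμ1 l ▸ integral_nonneg_of_ae (hZ1nn.mono fun _ h => h l)
  have hμ2nn : ∀ l, 0 ≤ μ2 l := fun l => hμ2 l ▸ integral_nonneg_of_ae (hZ2nn.mono fun _ h => h l)
  have hωo_pos : ∀ l, 0 < ωo l := fun l => hωo l ▸ half_add_pos_of_ne (hμ1nn l) (hμ2nn l) (hμne l)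
  have hgap12 : ∀ l, (μt1 l - μt2 l) ^ 2 ≤ 4 := fun l => by
    rw [hμt1, hμt2]; exact sq_div_sub_div_le_four (hμ1nn l) (hμ2nn l) (hωo l)
  have hgap21 : ∀ l, (μt2 l - μt1 l) ^ 2 ≤ 4 := fun l => by
    rw [hμt1, hμt2]; exact sq_div_sub_div_le_four (hμ2nn l) (hμ1nn l) (by rw [hωo, add_comm])
  have hΔ_symm : ∑ l, w l ^ 2 * (μt2 l - μt1 l) ^ 2 = ∑ l, w l ^ 2 * (μt1 l - μt2 l) ^ 2 :=
    sum_congr rfl fun l _ => by ring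
  obtain ⟨l0, hl0 : w l0 ≠ 0⟩ := Function.ne_iff.mp hwne
  have hμt_ne : μt1 l0 - μt2 l0 ≠ 0 := by
    rw [hμt1, hμt2, sub_ne_zero, Ne, div_left_inj' (hωo_pos l0).ne']; exact hμne l0
  have hΔ : 0 < ∑ l, w l ^ 2 * (μt1 l - μt2 l) ^ 2 :=
    sum_pos' (fun l _ => by positivity) ⟨l0, mem_univ _, by positivity⟩
  have h1 := measure_misclassified_toReal_le hZ1L2 hμ1 huncorr1 hμt1 (σt := σt1)
    (fun l => by rw [hσt1, hσ1]) hgap21 (hΔ_symm ▸ hΔ)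
  have h2 := measure_misclassified_toReal_le hZ2L2 hμ2 huncorr2 hμt2 (σt := σt2)
    (fun l => by rw [hσt2, hσ2]) hgap12 hΔ
  rw [hΔ_symm] at h1
  set Δ := ∑ l, w l ^ 2 * (μt1 l - μt2 l) ^ 2
  have hσ_sq : ∑ l, w l ^ 4 * σt1 l ^ 2 + ∑ l, w l ^ 4 * σt2 l ^ 2 ≤
      ∑ l, w l ^ 4 * (σt1 l + σt2 l) ^ 2 := by
    rw [← sum_add_distrib]
    refine sum_le_sum fun l _ => ?_
    have : 0 ≤ σt1 l * σt2 l := by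
      rw [hσt1, hσt2, hσ1, hσ2]; have := hωo_pos l; positivity
    nlinarith [pow_nonneg (sq_nonneg (w l)) 2]
  rw [hR]
  calc _ ≤ 1 / 2 * (16 * (∑ l, w l ^ 4 * σt1 l ^ 2) / Δ ^ 2 +
        16 * (∑ l, w l ^ 4 * σt2 l ^ 2) / Δ ^ 2) := by gcongr
    _ = 8 * (∑ l, w l ^ 4 * σt1 l ^ 2 + ∑ l, w l ^ 4 * σt2 l ^ 2) / Δ ^ 2 := by ring
    _ ≤ _ := by gcongr

/-- Proposition 3.1 of the paper: the expected misclassification rate `R` of the weighted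
nearest-centroid classifier satisfies
`R ≤ 8 ∑ ω⁴ (σ̃₁+σ̃₂)² / (∑ ω² (μ̃₁-μ̃₂)²)²`. -/
theorem stmt5 {Ω : Type*} [MeasurableSpace Ω] (P : Measure Ω) [IsProbabilityMeasure P]
    (d : ℕ) (hd : 1 ≤ d) (Z1 Z2 : Ω → Fin d → ℝ)
    (hZ1nn : ∀ᵐ ω ∂P, ∀ l, 0 ≤ Z1 ω l) (hZ2nn : ∀ᵐ ω ∂P, ∀ l, 0 ≤ Z2 ω l)
    (hZ1L2 : ∀ l, MemLp (fun ω => Z1 ω l) 2 P)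
    (hZ2L2 : ∀ l, MemLp (fun ω => Z2 ω l) 2 P)
    (μ1 μ2 σ1 σ2 : Fin d → ℝ)
    (hμ1 : ∀ l, μ1 l = ∫ ω, Z1 ω l ∂P) (hμ2 : ∀ l, μ2 l = ∫ ω, Z2 ω l ∂P)
    (hσ1 : ∀ l, σ1 l = Real.sqrt (variance (fun ω => Z1 ω l) P))
    (hσ2 : ∀ l, σ2 l = Real.sqrt (variance (fun ω => Z2 ω l) P))
    (huncorr1 : ∀ l m, l ≠ m → ∫ ω, Z1 ω l * Z1 ω m ∂P = μ1 l * μ1 m)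
    (huncorr2 : ∀ l m, l ≠ m → ∫ ω, Z2 ω l * Z2 ω m ∂P = μ2 l * μ2 m)
    (hμne : ∀ l, μ1 l ≠ μ2 l)
    (ωo : Fin d → ℝ) (hωo : ∀ l, ωo l = (μ1 l + μ2 l) / 2)
    (μt1 μt2 σt1 σt2 : Fin d → ℝ)
    (hμt1 : ∀ l, μt1 l = μ1 l / ωo l) (hμt2 : ∀ l, μt2 l = μ2 l / ωo l)
    (hσt1 : ∀ l, σt1 l = σ1 l / ωo l) (hσt2 : ∀ l, σt2 l = σ2 l / ωo l)
    (hσpos : ∀ l, 0 < σ1 l + σ2 l)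
    (w : Fin d → ℝ) (hw : ∀ l, 0 ≤ w l) (hwne : w ≠ 0)
    (R : ℝ)
    (hR : R = (1 / 2) *
      ((P {ω | Real.sqrt (∑ l, (w l * (Z1 ω l / ωo l - μt2 l)) ^ 2) <
               Real.sqrt (∑ l, (w l * (Z1 ω l / ωo l - μt1 l)) ^ 2)}).toReal +
       (P {ω | Real.sqrt (∑ l, (w l * (Z2 ω l / ωo l - μt1 l)) ^ 2) <
               Real.sqrt (∑ l, (w l * (Z2 ω l / ωo l - μt2 l)) ^ 2)}).toReal)) :
    R ≤ 8 * (∑ l, (w l) ^ 4 * (σt1 l + σt2 l) ^ 2) /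
        (∑ l, (w l) ^ 2 * (μt1 l - μt2 l) ^ 2) ^ 2 :=
  stmt5_general P d Z1 Z2 hZ1nn hZ2nn hZ1L2 hZ2L2 μ1 μ2 σ1 σ2 hμ1 hμ2 hσ1 hσ2 huncorr1 huncorr2 hμne
    ωo hωo μt1 μt2 σt1 σt2 hμt1 hμt2 hσt1 hσt2 w hwne R hR
end

section
/- For every real k > 0 and every λ > 0, φ_k is twice differentiable at λ with second derivative φ_k''(λ) = k·((k+1) − (2λ+1)·log(1 + 1/λ)) / ((λ² + λ)²·(log(1 + 1/λ))^{k+2}). In particular, φ_k''(λ) < 0 if and only if (2λ+1)·log(1 + 1/λ) > k + 1. -/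
/-!
On `(0, ∞)` we have `φ_k = L ^ (-k)` with `L y = log (1 + 1 / y)` and `L' y = -1 / (y² + y)`,
so `φ_k' y = k / ((y² + y) L(y) ^ (k + 1))` on a neighbourhood of `λ`; differentiating this
quotient once more gives the formula. Its denominator is positive, so for `k > 0` its sign is
that of `(k + 1) - (2λ + 1) L(λ)`.
-/

/-- The paper's channel-wise feature transformation (Eq. (1)). -/
noncomputable def phi (k : ℝ) (l : ℝ) : ℝ :=
  if 0 < l then 1 / (Real.log (1 / l + 1)) ^ k else 0

open Real Set Topology

lemma log_one_add_one_div_pos {x : ℝ} (hx : 0 < x) : 0 < log (1 + 1 / x) :=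
  log_pos (by simpa using one_div_pos.mpr hx)

lemma hasDerivAt_log_one_add_one_div {x : ℝ} (hx : 0 < x) :
    HasDerivAt (fun y ↦ log (1 + 1 / y)) (-(1 / (x ^ 2 + x))) x := by
  have hinv : HasDerivAt (fun y ↦ 1 + 1 / y) (-(1 / x ^ 2)) x := by
    simpa [one_div] using (hasDerivAt_inv hx.ne').const_add 1
  convert hinv.log (by positivity) using 1
  field_simp

lemma phi_eqOn_rpow_neg (k : ℝ) : EqOn (phi k) (fun y ↦ log (1 + 1 / y) ^ (-k)) (Ioi 0) := by
  intro y (hy : 0 < y)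
  dsimp only
  rw [phi, if_pos hy, add_comm (1 / y), one_div, rpow_neg (log_one_add_one_div_pos hy).le]

noncomputable def phiDeriv (k y : ℝ) : ℝ := k / ((y ^ 2 + y) * log (1 + 1 / y) ^ (k + 1))

lemma hasDerivAt_phi {k x : ℝ} (hx : 0 < x) : HasDerivAt (phi k) (phiDeriv k x) x := by
  have hL := log_one_add_one_div_pos hx
  have hrpow := (hasDerivAt_log_one_add_one_div hx).rpow_const (p := -k) (Or.inl hL.ne')
  refine (hrpow.congr_of_eventuallyEq ((phi_eqOn_rpow_neg k).eventuallyEq_of_mem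
    (Ioi_mem_nhds hx))).congr_deriv ?_
  rw [phiDeriv, show -k - 1 = -(k + 1) by ring, rpow_neg hL.le]
  have : 0 < log (1 + 1 / x) ^ (k + 1) := rpow_pos_of_pos hL _
  field_simp

lemma deriv_phi_eventuallyEq {k x : ℝ} (hx : 0 < x) :
    deriv (phi k) =ᶠ[𝓝 x] phiDeriv k := by
  filter_upwards [Ioi_mem_nhds hx] with y hy
  exact (hasDerivAt_phi hy).deriv

lemma hasDerivAt_phiDeriv {k x : ℝ} (hx : 0 < x) :
    HasDerivAt (phiDeriv k)
      (k * ((k + 1) - (2 * x + 1) * log (1 + 1 / x)) /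
        ((x ^ 2 + x) ^ 2 * log (1 + 1 / x) ^ (k + 2))) x := by
  have hL := log_one_add_one_div_pos hx
  have hpoly : HasDerivAt (fun y ↦ y ^ 2 + y) (2 * x + 1) x := by
    simpa using (hasDerivAt_pow 2 x).fun_add (hasDerivAt_id' x)
  have hpow := (hasDerivAt_log_one_add_one_div hx).rpow_const (p := k + 1) (Or.inl hL.ne')
  have hquot := (hasDerivAt_const x k).fun_div (hpoly.fun_mul hpow) (by positivity)
  refine hquot.congr_deriv ?_
  have hk1 : log (1 + 1 / x) ^ (k + 1) = log (1 + 1 / x) ^ k * log (1 + 1 / x) := by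
    rw [rpow_add hL, rpow_one]
  have hk2 : log (1 + 1 / x) ^ (k + 2) = log (1 + 1 / x) ^ k * log (1 + 1 / x) ^ 2 := by
    rw [rpow_add hL, rpow_two]
  rw [add_sub_cancel_right, hk1, hk2]
  have hA : 0 < x ^ 2 + x := by positivity
  have hLk : 0 < log (1 + 1 / x) ^ k := rpow_pos_of_pos hL k
  field_simp
  ring

lemma mul_sub_div_neg_iff {α : Type*} [Field α] [LinearOrder α] [IsStrictOrderedRing α]
    {k a b D : α} (hk : 0 < k) (hD : 0 < D) : k * (a - b) / D < 0 ↔ a < b := by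
  rw [div_lt_iff₀ hD, zero_mul, ← mul_zero k, mul_lt_mul_iff_right₀ hk, sub_neg]

/-- For every `k > 0` and `λ > 0`, `φ_k` is twice differentiable at `λ` with second derivative
`k ((k+1) - (2λ+1) log(1 + 1/λ)) / ((λ² + λ)² (log(1 + 1/λ))^(k+2))`; in particular
`φ_k''(λ) < 0` if and only if `(2λ+1) log(1 + 1/λ) > k + 1`. -/
theorem stmt12 (k : ℝ) (hk : 0 < k) (l : ℝ) (hl : 0 < l) :
    HasDerivAt (deriv (phi k))
      (k * ((k + 1) - (2 * l + 1) * Real.log (1 + 1 / l)) /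
        ((l ^ 2 + l) ^ 2 * (Real.log (1 + 1 / l)) ^ (k + 2))) l ∧
    (k * ((k + 1) - (2 * l + 1) * Real.log (1 + 1 / l)) /
        ((l ^ 2 + l) ^ 2 * (Real.log (1 + 1 / l)) ^ (k + 2)) < 0 ↔
      k + 1 < (2 * l + 1) * Real.log (1 + 1 / l)) := by
  have hden : 0 < (l ^ 2 + l) ^ 2 * log (1 + 1 / l) ^ (k + 2) :=
    mul_pos (by positivity) (rpow_pos_of_pos (log_one_add_one_div_pos hl) _)
  exact ⟨(hasDerivAt_phiDeriv hl).congr_of_eventuallyEq (deriv_phi_eventuallyEq hl),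
    mul_sub_div_neg_iff hk hden⟩
end

section
/- The function ψ(λ) = (2λ + 1)·log(1 + 1/λ) is strictly decreasing on (0, ∞); moreover lim_{λ→0⁺} ψ(λ) = +∞ and lim_{λ→∞} ψ(λ) = 2, so ψ(λ) > 2 for every λ > 0. (Equivalently, for every x > 0 one has x(2 + x)/(1 + x) > 2·log(1 + x), which upon substituting x = 1/λ yields that ψ'(λ) = 2·log(1 + 1/λ) − (2λ + 1)/(λ² + λ) < 0 for all λ > 0.) -/
/-!
With `x = 1/λ`, the sign of `ψ'` is that of `2 log(1 + x) - x(2 + x)/(1 + x)`, which vanishes at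
`x = 0` and has derivative `-x²/(1 + x)²`; so `ψ' < 0` and `ψ` is strictly decreasing. The limit
`λ log(1 + 1/λ) → 1` gives `ψ → 2` at infinity, and a strictly decreasing function stays above
its limit at infinity.
-/

open Filter Set Topology

theorem StrictAntiOn.lt_of_tendsto_atTop {α β : Type*} [LinearOrder α] [NoMaxOrder α]
    [TopologicalSpace β] [Preorder β] [OrderClosedTopology β] {f : α → β} {a : α} {L : β}
    (hf : StrictAntiOn f (Ioi a)) (hlim : Tendsto f atTop (𝓝 L)) {x : α} (hx : a < x) :
    L < f x := by
  obtain ⟨y, hxy⟩ := exists_gt x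
  have hy : a < y := hx.trans hxy
  have : Nonempty α := ⟨x⟩
  have hLy : L ≤ f y := le_of_tendsto hlim <| by
    filter_upwards [eventually_ge_atTop y] with z hz
    exact hf.antitoneOn hy (hy.trans_le hz) hz
  exact hLy.trans_lt (hf hx hy hxy)

theorem hasDerivAt_mul_two_add_div_one_add_sub_two_mul_log {x : ℝ} (hx : -1 < x) :
    HasDerivAt (fun x : ℝ => x * (2 + x) / (1 + x) - 2 * Real.log (1 + x))
      (x ^ 2 / (1 + x) ^ 2) x := by
  have h1 : 1 + x ≠ 0 := by linarith
  have hv : HasDerivAt (fun x : ℝ => 1 + x) 1 x := (hasDerivAt_id x).const_add 1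
  have hu : HasDerivAt (fun x : ℝ => x * (2 + x)) (1 * (2 + x) + x * 1) x :=
    (hasDerivAt_id x).mul ((hasDerivAt_id x).const_add 2)
  refine ((hu.div hv h1).sub ((hv.log h1).const_mul 2)).congr_deriv ?_
  field_simp
  ring

theorem two_mul_log_one_add_lt {x : ℝ} (hx : 0 < x) :
    2 * Real.log (1 + x) < x * (2 + x) / (1 + x) := by
  set g : ℝ → ℝ := fun x => x * (2 + x) / (1 + x) - 2 * Real.log (1 + x)
  have hg : StrictMonoOn g (Ici 0) := by
    refine strictMonoOn_of_deriv_pos (convex_Ici 0) (fun y hy => ?_) (fun y hy => ?_)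
    · have hy : (-1 : ℝ) < y := by linarith [mem_Ici.1 hy]
      exact (hasDerivAt_mul_two_add_div_one_add_sub_two_mul_log hy).continuousAt.continuousWithinAt
    · rw [interior_Ici] at hy
      have hy : (0 : ℝ) < y := hy
      rw [(hasDerivAt_mul_two_add_div_one_add_sub_two_mul_log (by linarith)).deriv]
      positivity
  have := hg self_mem_Ici hx.le hx
  simp only [g, mul_zero, add_zero, Real.log_one, sub_zero] at this
  linarith

noncomputable def psi (l : ℝ) : ℝ := (2 * l + 1) * Real.log (1 + 1 / l)

theorem hasDerivAt_psi {l : ℝ} (hl : 0 < l) :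
    HasDerivAt psi (2 * Real.log (1 + 1 / l) - (2 * l + 1) / (l ^ 2 + l)) l := by
  have h1 : 1 + 1 / l ≠ 0 := by positivity
  have hv : HasDerivAt (fun l : ℝ => 1 + 1 / l) (-(l ^ 2)⁻¹) l := by
    simpa only [one_div] using (hasDerivAt_inv hl.ne').const_add 1
  have hu : HasDerivAt (fun l : ℝ => 2 * l + 1) 2 l := by
    simpa using ((hasDerivAt_id l).const_mul 2).add_const 1
  refine (hu.mul (hv.log h1)).congr_deriv ?_
  have hl2 : l ^ 2 + l ≠ 0 := by positivity
  field_simp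
  ring

theorem two_mul_log_one_add_one_div_lt {l : ℝ} (hl : 0 < l) :
    2 * Real.log (1 + 1 / l) < (2 * l + 1) / (l ^ 2 + l) := by
  have hsubst : 1 / l * (2 + 1 / l) / (1 + 1 / l) = (2 * l + 1) / (l ^ 2 + l) := by
    have hl2 : l ^ 2 + l ≠ 0 := by positivity
    field_simp
  exact hsubst ▸ two_mul_log_one_add_lt (one_div_pos.2 hl)

theorem strictAntiOn_psi : StrictAntiOn psi (Ioi 0) := by
  refine strictAntiOn_of_deriv_neg (convex_Ioi 0)
    (fun l hl => (hasDerivAt_psi hl).continuousAt.continuousWithinAt) (fun l hl => ?_)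
  rw [interior_Ioi] at hl
  rw [(hasDerivAt_psi hl).deriv]
  exact sub_neg.2 (two_mul_log_one_add_one_div_lt hl)

theorem tendsto_psi_nhdsGT_zero : Tendsto psi (𝓝[>] 0) atTop := by
  have hlin : Tendsto (fun l : ℝ => 2 * l + 1) (𝓝[>] 0) (𝓝 1) := by
    have : Continuous (fun l : ℝ => 2 * l + 1) := by fun_prop
    simpa using (this.tendsto (0 : ℝ)).mono_left nhdsWithin_le_nhds
  have hlog : Tendsto (fun l : ℝ => Real.log (1 + 1 / l)) (𝓝[>] 0) atTop := by
    simpa only [one_div, Function.comp_def] using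
      Real.tendsto_log_atTop.comp (tendsto_const_nhds.add_atTop tendsto_inv_nhdsGT_zero)
  exact hlin.pos_mul_atTop one_pos hlog

theorem tendsto_psi_atTop : Tendsto psi atTop (𝓝 2) := by
  have hmul : Tendsto (fun l : ℝ => l * Real.log (1 + 1 / l)) atTop (𝓝 1) := by
    simpa using Real.tendsto_mul_log_one_add_div_atTop 1
  have hlog : Tendsto (fun l : ℝ => Real.log (1 + 1 / l)) atTop (𝓝 0) := by
    have h1 : Tendsto (fun l : ℝ => 1 + 1 / l) atTop (𝓝 1) := by
      simpa [one_div] using tendsto_inv_atTop_zero.const_add (1 : ℝ)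
    simpa using h1.log one_ne_zero
  convert (hmul.const_mul 2).add hlog using 2 with l
  · simp only [psi]
    ring
  · norm_num

/-- The function `ψ(λ) = (2λ+1) log(1 + 1/λ)` is strictly decreasing on `(0, ∞)`, tends to
`+∞` as `λ → 0⁺` and to `2` as `λ → ∞`, hence `ψ(λ) > 2` for every `λ > 0`; equivalently, for
every `x > 0` one has `x(2+x)/(1+x) > 2 log(1+x)`, which yields
`ψ'(λ) = 2 log(1 + 1/λ) - (2λ+1)/(λ² + λ) < 0` for all `λ > 0`. -/
theorem stmt14 (ψ : ℝ → ℝ) (hψ : ∀ l, ψ l = (2 * l + 1) * Real.log (1 + 1 / l)) :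
    StrictAntiOn ψ (Set.Ioi 0) ∧
    Tendsto ψ (nhdsWithin 0 (Set.Ioi 0)) atTop ∧
    Tendsto ψ atTop (nhds 2) ∧
    (∀ l : ℝ, 0 < l → 2 < ψ l) ∧
    (∀ x : ℝ, 0 < x → 2 * Real.log (1 + x) < x * (2 + x) / (1 + x)) ∧
    (∀ l : ℝ, 0 < l →
      HasDerivAt ψ (2 * Real.log (1 + 1 / l) - (2 * l + 1) / (l ^ 2 + l)) l ∧
      2 * Real.log (1 + 1 / l) - (2 * l + 1) / (l ^ 2 + l) < 0) := by
  obtain rfl : ψ = psi := funext hψ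
  exact ⟨strictAntiOn_psi, tendsto_psi_nhdsGT_zero, tendsto_psi_atTop,
    fun l hl => strictAntiOn_psi.lt_of_tendsto_atTop tendsto_psi_atTop hl,
    fun x hx => two_mul_log_one_add_lt hx,
    fun l hl => ⟨hasDerivAt_psi hl, sub_neg.2 (two_mul_log_one_add_one_div_lt hl)⟩⟩
end

section
/- For every real k > 1, there exists a unique t > 0 such that (2t + 1)·log(1 + 1/t) = k + 1; moreover the second derivative of φ_k satisfies φ_k''(λ) < 0 for all λ ∈ (0, t) and φ_k''(λ) > 0 for all λ ∈ (t, ∞). -/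
/-!
On `(0, ∞)` we have `φ_k = L^(-k)` with `L x = log (1 + 1/x)` and `L' x = -1/(x² + x)`, and two
differentiations give `φ_k'' = k (x² + x)⁻² L^(-k-2) (k + 1 - ψ)` with `ψ x = (2x + 1) L x`.
So for `k > 0` the sign of `φ_k''` is that of `k + 1 - ψ`. The function `ψ` is strictly
decreasing because `ψ' = 2 log y - (y - 1/y)` with `y = 1 + 1/x > 1`, and `2 log y < y - 1/y` is
`log y < sinh (log y)`. Finally `ψ` takes every value above `2`: `ψ (e^(-c)) > log (1 + e^c) > c`
and `ψ x ≤ (2x + 1)/x = 2 + 1/x`.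
-/

open Real Filter Set Topology

namespace Phi

noncomputable def L (x : ℝ) : ℝ := log (1 + x⁻¹)

noncomputable def psi (x : ℝ) : ℝ := (2 * x + 1) * L x

lemma L_pos {x : ℝ} (hx : 0 < x) : 0 < L x :=
  log_pos (lt_add_of_pos_right 1 (inv_pos.mpr hx))

lemma hasDerivAt_L {x : ℝ} (hx : 0 < x) : HasDerivAt L (-(x ^ 2 + x)⁻¹) x := by
  have hinv : HasDerivAt (fun y : ℝ => 1 + y⁻¹) (-(x ^ 2)⁻¹) x := by
    simpa using (hasDerivAt_inv hx.ne').const_add 1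
  show HasDerivAt (fun y => log (1 + y⁻¹)) _ x
  convert hinv.log (by positivity) using 1
  field_simp

lemma two_mul_log_lt_sub_inv {y : ℝ} (hy : 1 < y) : 2 * log y < y - y⁻¹ := by
  have h := self_lt_sinh_iff.mpr (log_pos hy)
  rw [sinh_log (by positivity)] at h
  linarith

lemma hasDerivAt_psi {x : ℝ} (hx : 0 < x) :
    HasDerivAt psi (2 * L x + (2 * x + 1) * -(x ^ 2 + x)⁻¹) x :=
  ((((hasDerivAt_id' x).const_mul 2).add_const 1).mul (hasDerivAt_L hx)).congr_deriv (by ring)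

lemma continuousOn_psi : ContinuousOn psi (Ioi 0) :=
  fun _ hx => (hasDerivAt_psi hx).continuousAt.continuousWithinAt

lemma psi_strictAntiOn : StrictAntiOn psi (Ioi 0) := by
  refine strictAntiOn_of_deriv_neg (convex_Ioi 0) continuousOn_psi fun x hx => ?_
  rw [interior_Ioi] at hx
  have hx : (0 : ℝ) < x := hx
  have hy : 1 < 1 + x⁻¹ := lt_add_of_pos_right 1 (inv_pos.mpr hx)
  have hsub : (1 + x⁻¹) - (1 + x⁻¹)⁻¹ = (2 * x + 1) * (x ^ 2 + x)⁻¹ := by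
    field_simp
    ring
  rw [(hasDerivAt_psi hx).deriv]
  have hlog := two_mul_log_lt_sub_inv hy
  rw [hsub] at hlog
  unfold L
  linarith

lemma lt_psi_exp_neg (c : ℝ) : c < psi (exp (-c)) := by
  have hL : c < L (exp (-c)) := by
    rw [L, exp_neg, inv_inv]
    calc c = log (exp c) := (log_exp c).symm
      _ < log (1 + exp c) := log_lt_log (exp_pos c) (lt_one_add _)
  exact hL.trans_le <|
    le_mul_of_one_le_left (L_pos (exp_pos _)).le (by linarith [exp_pos (-c)])

lemma psi_le_two_add_inv {x : ℝ} (hx : 0 < x) : psi x ≤ 2 + x⁻¹ := by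
  have hL : L x ≤ x⁻¹ := by
    simpa [L] using log_le_sub_one_of_pos (show 0 < 1 + x⁻¹ by positivity)
  calc psi x ≤ (2 * x + 1) * x⁻¹ := mul_le_mul_of_nonneg_left hL (by positivity)
    _ = 2 + x⁻¹ := by field_simp

lemma exists_psi_eq {c : ℝ} (hc : 2 < c) : ∃ t, 0 < t ∧ psi t = c := by
  have hb : (0 : ℝ) < (c - 2)⁻¹ := inv_pos.mpr (sub_pos.mpr hc)
  have hψb : psi (c - 2)⁻¹ ≤ c := by
    simpa using psi_le_two_add_inv hb
  exact isPreconnected_Ioi.intermediate_value hb (exp_pos (-c)) continuousOn_psi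
    ⟨hψb, (lt_psi_exp_neg c).le⟩

lemma phi_eventuallyEq {k x : ℝ} (hx : 0 < x) : phi k =ᶠ[𝓝 x] fun y => L y ^ (-k) := by
  filter_upwards [Ioi_mem_nhds hx] with y (hy : 0 < y)
  rw [phi, if_pos hy, rpow_neg (L_pos hy).le, L, one_div, one_div, add_comm]

lemma deriv_phi {k x : ℝ} (hx : 0 < x) :
    deriv (phi k) x = k * (x ^ 2 + x)⁻¹ * L x ^ (-k - 1) := by
  rw [(phi_eventuallyEq hx).deriv_eq,
    ((hasDerivAt_L hx).rpow_const (Or.inl (L_pos hx).ne')).deriv]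
  ring

lemma deriv_deriv_phi {k x : ℝ} (hx : 0 < x) :
    deriv (deriv (phi k)) x = k * ((x ^ 2 + x)⁻¹) ^ 2 * L x ^ (-k - 2) * (k + 1 - psi x) := by
  have hL := L_pos hx
  have hderiv : deriv (phi k) =ᶠ[𝓝 x] fun y => k * (y ^ 2 + y)⁻¹ * L y ^ (-k - 1) := by
    filter_upwards [Ioi_mem_nhds hx] with y hy using deriv_phi hy
  have hq : HasDerivAt (fun y : ℝ => y ^ 2 + y) (2 * x + 1) x :=
    ((hasDerivAt_pow 2 x).add (hasDerivAt_id' x)).congr_deriv (by norm_num)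
  have hprod := ((hq.inv (by positivity)).const_mul k).mul
    ((hasDerivAt_L hx).rpow_const (p := -k - 1) (Or.inl hL.ne'))
  rw [hderiv.deriv_eq]
  refine hprod.deriv.trans ?_
  rw [psi,
    show L x ^ (-k - 1) = L x ^ (-k - 2) * L x by
      rw [← rpow_add_one hL.ne']; ring_nf,
    show -k - 1 - 1 = -k - 2 by ring, Pi.inv_apply]
  field_simp
  ring

lemma deriv_deriv_phi_neg {k x : ℝ} (hk : 0 < k) (hx : 0 < x) (hψ : k + 1 < psi x) :
    deriv (deriv (phi k)) x < 0 := by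
  have := rpow_pos_of_pos (L_pos hx) (-k - 2)
  rw [deriv_deriv_phi hx]
  exact mul_neg_of_pos_of_neg (by positivity) (by linarith)

lemma deriv_deriv_phi_pos {k x : ℝ} (hk : 0 < k) (hx : 0 < x) (hψ : psi x < k + 1) :
    0 < deriv (deriv (phi k)) x := by
  have := rpow_pos_of_pos (L_pos hx) (-k - 2)
  rw [deriv_deriv_phi hx]
  exact mul_pos (by positivity) (by linarith)

end Phi

open Phi in
/-- For every `k > 1` there is a unique `t > 0` with `(2t+1) log(1 + 1/t) = k + 1`; moreover
the second derivative of `φ_k` is negative on `(0, t)` and positive on `(t, ∞)`. -/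
theorem stmt16 (k : ℝ) (hk : 1 < k) :
    ∃ t : ℝ, 0 < t ∧ (2 * t + 1) * Real.log (1 + 1 / t) = k + 1 ∧
      (∀ s : ℝ, 0 < s → (2 * s + 1) * Real.log (1 + 1 / s) = k + 1 → s = t) ∧
      (∀ l : ℝ, 0 < l → l < t → deriv (deriv (phi k)) l < 0) ∧
      (∀ l : ℝ, t < l → 0 < deriv (deriv (phi k)) l) := by
  obtain ⟨t, ht, hψt⟩ := exists_psi_eq (by linarith : 2 < k + 1)
  have hk0 : 0 < k := by linarith
  simp only [one_div]
  refine ⟨t, ht, hψt, fun s hs hψs => psi_strictAntiOn.injOn hs ht (hψs.trans hψt.symm),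
    fun l hl hlt => ?_, fun l hlt => ?_⟩
  · exact deriv_deriv_phi_neg hk0 hl (hψt ▸ psi_strictAntiOn hl ht hlt)
  · exact deriv_deriv_phi_pos hk0 (ht.trans hlt) (hψt ▸ psi_strictAntiOn ht (ht.trans hlt) hlt)
end
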